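/- arXiv:1509.07724 — 3 statements merged into one kernel-verified Lean document; each statement's English description precedes it below -/
import Mathlib

section
/- Let (W,w), (V,v) and (Ṽ,ṽ) be Bessel fusion sequences in H, and let Q ∈ L(𝒲,𝒱) and Q̃ ∈ L(𝒲,𝒱̃) satisfy T_{V,v} Q = T_{Ṽ,ṽ} Q̃. If both Q and Q̃ are component preserving, then V_i = Ṽ_i for every i = 1,…,m. -/
noncomputable section

open scoped InnerProductSpace

variable {𝕜 : Type} [RCLike 𝕜]
variable {H : Type} [NormedAddCommGroup H] [InnerProductSpace 𝕜 H] [FiniteDimensional 𝕜 H]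
variable {m : ℕ}

/-- The Hilbert space `𝒲 = ⊕ᵢ Wᵢ` of a fusion sequence, with the ℓ² inner product. -/
abbrev FFSpace (W : Fin m → Submodule 𝕜 H) : Type := PiLp 2 (fun i => ↥(W i))

/-- The synthesis operator `T_{W,w} : 𝒲 → H`, `(fᵢ)ᵢ ↦ Σᵢ wᵢ fᵢ`. -/
def synthOp (W : Fin m → Submodule 𝕜 H) (w : Fin m → ℝ) : FFSpace W →ₗ[𝕜] H where
  toFun f := ∑ i, (w i : 𝕜) • (f i : H)
  map_add' f g := by
    simp [Finset.sum_add_distrib, smul_add]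
  map_smul' c f := by
    simp [Finset.smul_sum]
    congr 1; funext i; rw [smul_comm]

/-- The analysis operator `T*_{W,w} : H → 𝒲`, `f ↦ (wᵢ π_{Wᵢ} f)ᵢ`. -/
def analysisOp (W : Fin m → Submodule 𝕜 H) (w : Fin m → ℝ) : H →ₗ[𝕜] FFSpace W where
  toFun f := WithLp.toLp 2 (fun i => (w i : 𝕜) • (Submodule.orthogonalProjectionOnto (W i) f))
  map_add' f g := by
    ext i; simp [smul_add]
  map_smul' c f := by
    ext i; simp; rw [smul_comm]

/-- The coordinate operator `M_{J,W} : 𝒲 → 𝒲`, keeping the coordinates in `J`. -/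
def MJ (W : Fin m → Submodule 𝕜 H) (J : Finset (Fin m)) : FFSpace W →ₗ[𝕜] FFSpace W where
  toFun f := WithLp.toLp 2 (fun j => if j ∈ J then f j else 0)
  map_add' f g := by
    ext j; by_cases h : j ∈ J <;> simp [h]
  map_smul' c f := by
    ext j; by_cases h : j ∈ J <;> simp [h]

/-- `Q : 𝒲 → 𝒱` is block-diagonal if `Q M_{j,W} 𝒲 ⊆ M_{j,V} 𝒱` for all `j`. -/
def IsBlockDiagonal (W V : Fin m → Submodule 𝕜 H) (Q : FFSpace W →ₗ[𝕜] FFSpace V) : Prop :=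
  ∀ j, LinearMap.range (Q ∘ₗ MJ W {j}) ≤ LinearMap.range (MJ V {j})

/-- `Q : 𝒲 → 𝒱` is component preserving if `Q M_{j,W} 𝒲 = M_{j,V} 𝒱` for all `j`. -/
def IsComponentPreserving (W V : Fin m → Submodule 𝕜 H) (Q : FFSpace W →ₗ[𝕜] FFSpace V) : Prop :=
  ∀ j, LinearMap.range (Q ∘ₗ MJ W {j}) = LinearMap.range (MJ V {j})

/-- The orthogonal projection onto `U` as an endomorphism of `H`. -/
def projL (U : Submodule 𝕜 H) : H →ₗ[𝕜] H :=
  U.subtype ∘ₗ (Submodule.orthogonalProjectionOnto U : H →L[𝕜] U).toLinearMap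

end

section

variable {𝕜 : Type} [RCLike 𝕜] {H : Type} [NormedAddCommGroup H] [InnerProductSpace 𝕜 H] {m : ℕ}

lemma synthOp_MJ_singleton (V : Fin m → Submodule 𝕜 H) (v : Fin m → ℝ) (i : Fin m)
    (f : FFSpace V) : synthOp V v (MJ V {i} f) = (v i : 𝕜) • (f i : H) := by
  simp only [synthOp, MJ, LinearMap.coe_mk, AddHom.coe_mk]
  rw [Finset.sum_eq_single i (fun j _ hj => by simp [hj]) (by simp)]
  simp

lemma range_synthOp_comp_MJ_singleton (V : Fin m → Submodule 𝕜 H) (v : Fin m → ℝ) (i : Fin m)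
    (hvi : v i ≠ 0) : LinearMap.range (synthOp V v ∘ₗ MJ V {i}) = V i := by
  ext g
  simp only [LinearMap.mem_range, LinearMap.comp_apply, synthOp_MJ_singleton]
  constructor
  · rintro ⟨f, rfl⟩
    exact (V i).smul_mem _ (f i).2
  · intro hg
    refine ⟨WithLp.toLp 2 (Pi.single i ((v i : 𝕜)⁻¹ • ⟨g, hg⟩)), ?_⟩
    have hvi' : (v i : 𝕜) ≠ 0 := by exact_mod_cast hvi
    simp [smul_smul, mul_inv_cancel₀ hvi']

lemma range_synthOp_comp_comp_MJ_singleton {W V : Fin m → Submodule 𝕜 H} {v : Fin m → ℝ}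
    {Q : FFSpace W →ₗ[𝕜] FFSpace V} (hQ : IsComponentPreserving W V Q) (i : Fin m)
    (hvi : v i ≠ 0) : LinearMap.range (synthOp V v ∘ₗ Q ∘ₗ MJ W {i}) = V i := by
  rw [LinearMap.range_comp, hQ i, ← LinearMap.range_comp,
    range_synthOp_comp_MJ_singleton V v i hvi]

end

theorem eq_of_componentPreserving_of_synth_comp_eq_general
    {𝕜 : Type} [RCLike 𝕜] {H : Type} [NormedAddCommGroup H] [InnerProductSpace 𝕜 H]
    {m : ℕ}
    (W V V' : Fin m → Submodule 𝕜 H) (v v' : Fin m → ℝ)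
    (hv : ∀ i, 0 < v i) (hv' : ∀ i, 0 < v' i)
    (Q : FFSpace W →ₗ[𝕜] FFSpace V) (Q' : FFSpace W →ₗ[𝕜] FFSpace V')
    (heq : synthOp V v ∘ₗ Q = synthOp V' v' ∘ₗ Q')
    (hQ : IsComponentPreserving W V Q) (hQ' : IsComponentPreserving W V' Q') :
    ∀ i, V i = V' i := by
  intro i
  rw [← range_synthOp_comp_comp_MJ_singleton hQ i (hv i).ne',
    ← range_synthOp_comp_comp_MJ_singleton hQ' i (hv' i).ne', ← LinearMap.comp_assoc, heq,
    LinearMap.comp_assoc]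

/-- if `(W,w)`, `(V,v)`, `(Ṽ,ṽ)` are Bessel fusion sequences,
`T_{V,v} Q = T_{Ṽ,ṽ} Q̃` and both `Q`, `Q̃` are component preserving,
then `Vᵢ = Ṽᵢ` for all `i`. -/
theorem eq_of_componentPreserving_of_synth_comp_eq
    {𝕜 : Type} [RCLike 𝕜] {H : Type} [NormedAddCommGroup H] [InnerProductSpace 𝕜 H]
    [FiniteDimensional 𝕜 H] {m : ℕ}
    (W V V' : Fin m → Submodule 𝕜 H) (w v v' : Fin m → ℝ)
    (hw : ∀ i, 0 < w i) (hv : ∀ i, 0 < v i) (hv' : ∀ i, 0 < v' i)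
    (Q : FFSpace W →ₗ[𝕜] FFSpace V) (Q' : FFSpace W →ₗ[𝕜] FFSpace V')
    (heq : synthOp V v ∘ₗ Q = synthOp V' v' ∘ₗ Q')
    (hQ : IsComponentPreserving W V Q) (hQ' : IsComponentPreserving W V' Q') :
    ∀ i, V i = V' i :=
  eq_of_componentPreserving_of_synth_comp_eq_general W V V' v v' hv hv' Q Q' heq hQ hQ'
end

section
/- Let (W,w) be an overcomplete fusion frame for H (i.e., a fusion frame that is not a Riesz fusion basis) such that W_i ≠ {0} for every i = 1,…,m. Then there exist a fusion frame (V,v) and a component preserving Q ∈ L(𝒲,𝒱) such that (V,v) is a Q-dual fusion frame of (W,w) and V_{i₀} ≠ S_{W,w}^{-1} W_{i₀} for some index i₀; in particular (V,v) differs from the canonical dual (S_{W,w}^{-1}W, v') for every choice of weights v'. -/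
noncomputable section

open scoped InnerProductSpace

variable {𝕜 : Type} [RCLike 𝕜]
variable {H : Type} [NormedAddCommGroup H] [InnerProductSpace 𝕜 H] [FiniteDimensional 𝕜 H]
variable {m : ℕ}

/-- The fusion frame operator `S_{W,w} = Σᵢ wᵢ² π_{Wᵢ}`. -/
def fusionFrameOp (W : Fin m → Submodule 𝕜 H) (w : Fin m → ℝ) : H →ₗ[𝕜] H :=
  ∑ i, ((w i ^ 2 : ℝ) : 𝕜) • projL (W i)

/-!
Since `W` is not independent, there are `aⱼ ∈ Wⱼ`, not all zero, with `∑ⱼ aⱼ = 0`; say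
`a i₀ ≠ 0`. For every `u ∈ H` the operators `Bⱼ = wⱼ² S⁻¹ + ⟪aⱼ, ·⟫ u` still reconstruct,
`∑ⱼ Bⱼ π_{Wⱼ} = I`, because `∑ⱼ ⟪aⱼ, π_{Wⱼ} f⟫ = ⟪∑ⱼ aⱼ, f⟫ = 0`. Hence `Vⱼ = Bⱼ Wⱼ` with
weights `1 / wⱼ` is a dual of `(W, w)` for the block diagonal `Q = ⊕ⱼ Bⱼ|_{Wⱼ}`, which is
component preserving because it is onto and commutes with every `M_J`. Choosing `u` so that
`B i₀` kills `a i₀` makes `dim V i₀ < dim W i₀ = dim S⁻¹ W i₀`.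
-/

theorem exists_ne_zero_sum_eq_zero_of_not_iSupIndep {ι R M : Type*} [Fintype ι] [Ring R]
    [AddCommGroup M] [Module R M] {p : ι → Submodule R M} (h : ¬ iSupIndep p) :
    ∃ a : ι → M, (∀ i, a i ∈ p i) ∧ ∑ i, a i = 0 ∧ ∃ i, a i ≠ 0 := by
  classical
  simp only [iSupIndep_iff_finsetSum_eq_zero_imp_eq_zero, not_forall, exists_prop] at h
  obtain ⟨s, a, has, hsum, i, hi, hai⟩ := h
  refine ⟨fun j => if j ∈ s then a j else 0, fun j => ?_, ?_, i, by simpa [hi] using hai⟩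
  · dsimp only
    split_ifs with hj
    exacts [has j hj, zero_mem _]
  · simpa [Finset.sum_ite_mem] using hsum

theorem finrank_map_lt_of_mem_ker {K V V₂ : Type*} [DivisionRing K] [AddCommGroup V] [Module K V]
    [AddCommGroup V₂] [Module K V₂] {U : Submodule K V} [FiniteDimensional K U] {B : V →ₗ[K] V₂}
    {a : V} (ha : a ∈ U) (ha0 : a ≠ 0) (hBa : B a = 0) :
    Module.finrank K (U.map B) < Module.finrank K U := by
  have hrank := (B ∘ₗ U.subtype).finrank_range_add_finrank_ker
  rw [LinearMap.range_comp, Submodule.range_subtype] at hrank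
  have hker : 0 < Module.finrank K (LinearMap.ker (B ∘ₗ U.subtype)) :=
    Module.finrank_pos_iff_exists_ne_zero.mpr
      ⟨⟨⟨a, ha⟩, hBa⟩, fun h => ha0 congr((($h).1 : V))⟩
  omega

section BlockDiagonal

omit [FiniteDimensional 𝕜 H]

variable (W : Fin m → Submodule 𝕜 H) (B : Fin m → H →ₗ[𝕜] H)

def blockDiagOp : FFSpace W →ₗ[𝕜] FFSpace (fun j => (W j).map (B j)) where
  toFun f := WithLp.toLp 2 fun j => (B j).submoduleMap (W j) (f j)
  map_add' f g := by ext j; simp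
  map_smul' c f := by ext j; simp

@[simp]
theorem coe_blockDiagOp_apply (f : FFSpace W) (j : Fin m) :
    (blockDiagOp W B f j : H) = B j (f j) := rfl

theorem coe_MJ_apply (J : Finset (Fin m)) (f : FFSpace W) (j : Fin m) :
    (MJ W J f j : H) = if j ∈ J then (f j : H) else 0 := by
  by_cases hj : j ∈ J <;> simp [MJ, hj]

theorem blockDiagOp_comp_MJ (J : Finset (Fin m)) :
    blockDiagOp W B ∘ₗ MJ W J = MJ _ J ∘ₗ blockDiagOp W B := by
  ext f j : 3
  by_cases hj : j ∈ J <;> simp [coe_MJ_apply, hj]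

theorem blockDiagOp_surjective : Function.Surjective (blockDiagOp W B) := by
  intro g
  choose f hf using fun j => (B j).submoduleMap_surjective (W j) (g j)
  exact ⟨WithLp.toLp 2 f, by ext j : 1; exact hf j⟩

theorem IsComponentPreserving.of_comp_MJ_eq {V : Fin m → Submodule 𝕜 H}
    {Q : FFSpace W →ₗ[𝕜] FFSpace V} (hQ : ∀ j, Q ∘ₗ MJ W {j} = MJ V {j} ∘ₗ Q)
    (hQsurj : Function.Surjective Q) : IsComponentPreserving W V Q := fun j => by
  rw [hQ, LinearMap.range_comp, LinearMap.range_eq_top.mpr hQsurj, Submodule.map_top]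

theorem isComponentPreserving_blockDiagOp :
    IsComponentPreserving W (fun j => (W j).map (B j)) (blockDiagOp W B) :=
  .of_comp_MJ_eq W (fun j => blockDiagOp_comp_MJ W B {j}) (blockDiagOp_surjective W B)

end BlockDiagonal

theorem projL_eq_starProjection (U : Submodule 𝕜 H) :
    projL U = (U.starProjection : H →ₗ[𝕜] H) := rfl

theorem inner_projL_of_mem {U : Submodule 𝕜 H} {a : H} (ha : a ∈ U) (f : H) :
    ⟪a, projL U f⟫_𝕜 = ⟪a, f⟫_𝕜 := by
  rw [projL_eq_starProjection, ContinuousLinearMap.coe_coe,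
    ← Submodule.inner_starProjection_left_eq_right, Submodule.starProjection_eq_self_iff.mpr ha]

theorem fusionFrameOp_injective {W : Fin m → Submodule 𝕜 H} {w : Fin m → ℝ}
    (hw : ∀ i, w i ≠ 0) (hW : ⨆ i, W i = ⊤) : Function.Injective (fusionFrameOp W w) := by
  refine (injective_iff_map_eq_zero _).mpr fun f hf => ?_
  have hre : ∑ i, w i ^ 2 * ‖(W i).orthogonalProjectionOnto f‖ ^ 2 = 0 := by
    have := congrArg (fun g => RCLike.re ⟪g, f⟫_𝕜) hf
    simpa [fusionFrameOp, projL_eq_starProjection, sum_inner, inner_smul_left,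
      Submodule.re_inner_starProjection_eq_normSq] using this
  have hperp i : f ∈ (W i)ᗮ := by
    have := (Finset.sum_eq_zero_iff_of_nonneg (fun i _ => by positivity)).mp hre i
      (Finset.mem_univ i)
    simpa [hw i, Submodule.starProjection_apply_eq_zero_iff] using this
  have hf' : f ∈ (⨆ i, W i)ᗮ := by
    rw [← Submodule.iInf_orthogonal, Submodule.mem_iInf]
    exact hperp
  simpa [hW] using hf'

theorem synthOp_comp_blockDiagOp_comp_analysisOp (W : Fin m → Submodule 𝕜 H)
    (B : Fin m → H →ₗ[𝕜] H) {v w : Fin m → ℝ} (hvw : ∀ j, v j * w j = 1) :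
    synthOp _ v ∘ₗ blockDiagOp W B ∘ₗ analysisOp W w = ∑ j, B j ∘ₗ projL (W j) := by
  ext f
  simp [synthOp, analysisOp, projL, smul_smul, ← RCLike.ofReal_mul, hvw]

theorem iSup_map_eq_top_of_sum_comp_projL_eq_id {W : Fin m → Submodule 𝕜 H}
    {B : Fin m → H →ₗ[𝕜] H} (hB : ∑ j, B j ∘ₗ projL (W j) = LinearMap.id) :
    ⨆ j, (W j).map (B j) = ⊤ := by
  refine Submodule.eq_top_iff'.mpr fun f => ?_
  rw [← LinearMap.id_apply (R := 𝕜) f, ← hB, LinearMap.sum_apply]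
  exact Submodule.sum_mem _ fun j _ => Submodule.mem_iSup_of_mem j
    (Submodule.mem_map_of_mem (Submodule.starProjection_apply_mem _ _))

theorem sum_comp_projL_eq_id_of_sum_eq_zero {W : Fin m → Submodule 𝕜 H} {w : Fin m → ℝ}
    {T : H →ₗ[𝕜] H} (hT : T ∘ₗ fusionFrameOp W w = LinearMap.id) {a : Fin m → H}
    (ha : ∀ j, a j ∈ W j) (hsum : ∑ j, a j = 0) (u : H) :
    ∑ j, (((w j ^ 2 : ℝ) : 𝕜) • T + (innerₛₗ 𝕜 (a j)).smulRight u) ∘ₗ projL (W j) =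
      LinearMap.id := by
  ext f
  have hTf := congr($hT f)
  simp only [fusionFrameOp, LinearMap.comp_apply, LinearMap.sum_apply, LinearMap.smul_apply,
    map_sum, map_smul, RCLike.ofReal_pow, LinearMap.id_apply] at hTf
  simpa [LinearMap.sum_apply, Finset.sum_add_distrib, inner_projL_of_mem (ha _),
    ← Finset.sum_smul, ← sum_inner, hsum] using hTf

theorem exists_nonCanonical_componentPreserving_dual_general
    {𝕜 : Type} [RCLike 𝕜] {H : Type} [NormedAddCommGroup H] [InnerProductSpace 𝕜 H]
    [FiniteDimensional 𝕜 H] {m : ℕ}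
    (W : Fin m → Submodule 𝕜 H) (w : Fin m → ℝ) (hw : ∀ i, 0 < w i)
    (hW : ⨆ i, W i = ⊤) (hnotRiesz : ¬ iSupIndep W) :
    ∃ (V : Fin m → Submodule 𝕜 H) (v : Fin m → ℝ), (∀ i, 0 < v i) ∧
      ∃ Q : FFSpace W →ₗ[𝕜] FFSpace V,
        (⨆ i, V i = ⊤) ∧ IsComponentPreserving W V Q ∧
        synthOp V v ∘ₗ Q ∘ₗ analysisOp W w = LinearMap.id ∧
        ∃ i₀, V i₀ ≠ Submodule.comap (fusionFrameOp W w) (W i₀) := by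
  obtain ⟨a, haW, hsum, i₀, hai₀⟩ := exists_ne_zero_sum_eq_zero_of_not_iSupIndep hnotRiesz
  let S := LinearEquiv.ofInjectiveEndo _ (fusionFrameOp_injective (fun i => (hw i).ne') hW)
  let u : H := -(⟪a i₀, a i₀⟫_𝕜)⁻¹ • S.symm (((w i₀ ^ 2 : ℝ) : 𝕜) • a i₀)
  let B j := ((w j ^ 2 : ℝ) : 𝕜) • S.symm.toLinearMap + (innerₛₗ 𝕜 (a j)).smulRight u
  have hB : ∑ j, B j ∘ₗ projL (W j) = LinearMap.id :=
    sum_comp_projL_eq_id_of_sum_eq_zero (LinearMap.ext S.symm_apply_apply) haW hsum u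
  have hBa : B i₀ (a i₀) = 0 := by simp [B, u, smul_smul, hai₀]
  refine ⟨fun j => (W j).map (B j), fun j => (w j)⁻¹, fun j => inv_pos.mpr (hw j),
    blockDiagOp W B, iSup_map_eq_top_of_sum_comp_projL_eq_id hB,
    isComponentPreserving_blockDiagOp W B, ?_, i₀, fun h => ?_⟩
  · rw [synthOp_comp_blockDiagOp_comp_analysisOp W B fun j => inv_mul_cancel₀ (hw j).ne', hB]
  · have hlt := finrank_map_lt_of_mem_ker (haW i₀) hai₀ hBa
    dsimp only at h
    rw [h, show fusionFrameOp W w = S from rfl, Submodule.comap_equiv_eq_map_symm,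
      LinearEquiv.finrank_map_eq] at hlt
    exact hlt.false

/-- an overcomplete fusion frame `(W,w)` with nontrivial subspaces admits a
component preserving dual fusion frame whose subspaces differ from those of the canonical
duals `(S_{W,w}⁻¹ W, v')` (hence it differs from the canonical dual for every weights). -/
theorem exists_nonCanonical_componentPreserving_dual
    {𝕜 : Type} [RCLike 𝕜] {H : Type} [NormedAddCommGroup H] [InnerProductSpace 𝕜 H]
    [FiniteDimensional 𝕜 H] {m : ℕ}
    (W : Fin m → Submodule 𝕜 H) (w : Fin m → ℝ) (hw : ∀ i, 0 < w i)
    (hW : ⨆ i, W i = ⊤) (hnotRiesz : ¬ iSupIndep W) (hne : ∀ i, W i ≠ ⊥) :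
    ∃ (V : Fin m → Submodule 𝕜 H) (v : Fin m → ℝ), (∀ i, 0 < v i) ∧
      ∃ Q : FFSpace W →ₗ[𝕜] FFSpace V,
        (⨆ i, V i = ⊤) ∧ IsComponentPreserving W V Q ∧
        synthOp V v ∘ₗ Q ∘ₗ analysisOp W w = LinearMap.id ∧
        ∃ i₀, V i₀ ≠ Submodule.comap (fusionFrameOp W w) (W i₀) :=
  exists_nonCanonical_componentPreserving_dual_general W w hw hW hnotRiesz
end
end

section
/- Let (W,w) be a fusion frame for H such that w_i² ‖S_{W,w}^{-1} π_{W_i}‖_F = c for some constant c and every i = 1,…,m. Then S_{W,w}^{-1} T_{W,w} is the unique element of the set {A ∈ 𝔏_{T*_{W,w}} : max_{1≤i≤m} ‖A M_i T*_{W,w}‖_F = min_{B ∈ 𝔏_{T*_{W,w}}} max_{1≤i≤m} ‖B M_i T*_{W,w}‖_F}. -/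
noncomputable section

open scoped InnerProductSpace

variable {𝕜 : Type} [RCLike 𝕜]
variable {H : Type} [NormedAddCommGroup H] [InnerProductSpace 𝕜 H] [FiniteDimensional 𝕜 H]
variable {m : ℕ}

/-- The squared Frobenius norm `‖B‖_F² = tr(B*B)` of a linear map between
finite-dimensional inner product spaces. -/
def frobSq {𝕜 : Type} [RCLike 𝕜] {E F : Type} [NormedAddCommGroup E] [InnerProductSpace 𝕜 E]
    [FiniteDimensional 𝕜 E] [NormedAddCommGroup F] [InnerProductSpace 𝕜 F]
    [FiniteDimensional 𝕜 F] (B : E →ₗ[𝕜] F) : ℝ :=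
  RCLike.re (LinearMap.trace 𝕜 E (LinearMap.adjoint B ∘ₗ B))

/-- The worst-case one-erasure error `max_i ‖A Mᵢ T*_{W,w}‖_F` of a reconstruction
operator `A : 𝒲 → H`. -/
def maxErr (W : Fin m → Submodule 𝕜 H) (w : Fin m → ℝ) (A : FFSpace W →L[𝕜] H) : ℝ :=
  ⨆ i : Fin m, Real.sqrt (frobSq ((A : FFSpace W →ₗ[𝕜] H) ∘ₗ MJ W {i} ∘ₗ analysisOp W w))

/-- The set of left inverses of `T*_{W,w}` minimizing the worst-case one-erasure error. -/
def optimalSet (W : Fin m → Submodule 𝕜 H) (w : Fin m → ℝ) : Set (FFSpace W →L[𝕜] H) :=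
  {A | A ∘L LinearMap.toContinuousLinearMap (analysisOp W w) = ContinuousLinearMap.id 𝕜 H ∧
    maxErr W w A =
      ⨅ B : {B : FFSpace W →L[𝕜] H //
          B ∘L LinearMap.toContinuousLinearMap (analysisOp W w) = ContinuousLinearMap.id 𝕜 H},
        maxErr W w ↑B}

end

/-!
Write `A₀ = S⁻¹T` and `Bᵢ = B Mᵢ T*` for a left inverse `B` of `T*`. Since `A₀ᵢ = wᵢ² S⁻¹ π_{Wᵢ}`
and `Bᵢ π_{Wᵢ} = Bᵢ`, the Frobenius inner products satisfy
`Σᵢ wᵢ⁻² ⟨A₀ᵢ, Bᵢ⟩_F = Σᵢ tr(S⁻¹* Bᵢ) = tr(S⁻¹* B T*) = tr(S⁻¹*)`, whatever `B` is.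
The hypothesis says that every `‖A₀ᵢ‖_F` equals `c`, so `max ‖Bᵢ‖_F ≤ c` gives
`Re ⟨A₀ᵢ, Bᵢ⟩_F ≤ c ‖Bᵢ‖_F ≤ c²` termwise with equality in the weighted sum, forcing `Bᵢ = A₀ᵢ`;
as `Mᵢ T*` maps onto the `i`-th summand of `𝒲`, this gives `B = A₀`.
-/

open scoped InnerProductSpace

section Frobenius

variable {𝕜 : Type} [RCLike 𝕜] {E F : Type} [NormedAddCommGroup E] [InnerProductSpace 𝕜 E]
  [FiniteDimensional 𝕜 E] [NormedAddCommGroup F] [InnerProductSpace 𝕜 F]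

noncomputable def frobeniusVec :
    (E →ₗ[𝕜] F) →ₗ[𝕜] PiLp 2 (fun _ : Fin (Module.finrank 𝕜 E) => F) where
  toFun X := WithLp.toLp 2 fun j => X (stdOrthonormalBasis 𝕜 E j)
  map_add' _ _ := rfl
  map_smul' _ _ := rfl

theorem frobeniusVec_apply (X : E →ₗ[𝕜] F) (j : Fin (Module.finrank 𝕜 E)) :
    frobeniusVec X j = X (stdOrthonormalBasis 𝕜 E j) :=
  rfl

theorem frobeniusVec_injective : Function.Injective (frobeniusVec (𝕜 := 𝕜) (E := E) (F := F)) :=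
  fun X Y hXY => (stdOrthonormalBasis 𝕜 E).toBasis.ext fun j => by
    simpa [OrthonormalBasis.coe_toBasis, frobeniusVec_apply] using congrArg (fun v => v j) hXY

variable [FiniteDimensional 𝕜 F]

theorem trace_adjoint_comp_eq_inner_frobeniusVec (X Y : E →ₗ[𝕜] F) :
    LinearMap.trace 𝕜 E (LinearMap.adjoint Y ∘ₗ X) = ⟪frobeniusVec Y, frobeniusVec X⟫_𝕜 := by
  rw [LinearMap.trace_eq_sum_inner _ (stdOrthonormalBasis 𝕜 E), PiLp.inner_apply]
  refine Finset.sum_congr rfl fun j _ => ?_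
  rw [LinearMap.comp_apply, LinearMap.adjoint_inner_right, frobeniusVec_apply, frobeniusVec_apply]

theorem sqrt_frobSq_eq_norm_frobeniusVec (X : E →ₗ[𝕜] F) :
    Real.sqrt (frobSq X) = ‖frobeniusVec X‖ := by
  rw [frobSq, trace_adjoint_comp_eq_inner_frobeniusVec, inner_self_eq_norm_sq (𝕜 := 𝕜),
    Real.sqrt_sq (norm_nonneg _)]

end Frobenius

theorem eq_of_norm_le_of_sum_inner_eq {𝕜 ι E : Type*} [RCLike 𝕜] [Fintype ι]
    [NormedAddCommGroup E] [InnerProductSpace 𝕜 E] {a b : ι → E} {r : ι → ℝ} (hr : ∀ i, 0 < r i)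
    (hnorm : ∀ i, ‖b i‖ ≤ ‖a i‖)
    (hsum : ∑ i, (r i : 𝕜) * ⟪a i, b i⟫_𝕜 = ∑ i, (r i : 𝕜) * ⟪a i, a i⟫_𝕜) : b = a := by
  have hle : ∀ i, RCLike.re ⟪a i, b i⟫_𝕜 ≤ ‖a i‖ ^ 2 := fun i =>
    (re_inner_le_norm _ _).trans (by nlinarith [hnorm i, norm_nonneg (a i)])
  have hre : ∑ i, r i * RCLike.re ⟪a i, b i⟫_𝕜 = ∑ i, r i * ‖a i‖ ^ 2 := by
    simpa only [map_sum, RCLike.re_ofReal_mul, inner_self_eq_norm_sq] using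
      congrArg RCLike.re hsum
  have heq : ∀ i, RCLike.re ⟪a i, b i⟫_𝕜 = ‖a i‖ ^ 2 := fun i =>
    mul_left_cancel₀ (hr i).ne' <| (Finset.sum_eq_sum_iff_of_le fun j _ =>
      mul_le_mul_of_nonneg_left (hle j) (hr j).le).mp hre i (Finset.mem_univ i)
  funext i
  have hdist : ‖a i - b i‖ ^ 2 ≤ 0 := by
    rw [norm_sub_sq (𝕜 := 𝕜), heq i]
    nlinarith [hnorm i, norm_nonneg (b i)]
  rw [eq_comm, ← sub_eq_zero, ← norm_eq_zero]
  exact pow_eq_zero_iff two_ne_zero |>.mp (le_antisymm hdist (sq_nonneg _))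

section FusionFrame

variable {𝕜 : Type} [RCLike 𝕜] {H : Type} [NormedAddCommGroup H] [InnerProductSpace 𝕜 H] {m : ℕ}
  (W : Fin m → Submodule 𝕜 H) (w : Fin m → ℝ)

theorem sum_MJ_singleton_apply (g : FFSpace W) : ∑ i, MJ W {i} g = g := by
  ext j
  simp [MJ, WithLp.ofLp_sum, Finset.sum_apply]

theorem sum_comp_MJ_singleton_comp {G G' : Type*} [AddCommGroup G] [Module 𝕜 G] [AddCommGroup G']
    [Module 𝕜 G'] (C : FFSpace W →ₗ[𝕜] G) (D : G' →ₗ[𝕜] FFSpace W) :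
    ∑ i, C ∘ₗ MJ W {i} ∘ₗ D = C ∘ₗ D := by
  ext x
  simp only [LinearMap.sum_apply, LinearMap.comp_apply, ← map_sum, sum_MJ_singleton_apply]

variable [FiniteDimensional 𝕜 H]

theorem adjoint_projL (U : Submodule 𝕜 H) : LinearMap.adjoint (projL U) = projL U :=
  ((LinearMap.eq_adjoint_iff _ _).mpr fun x y =>
    Submodule.inner_starProjection_left_eq_right U x y).symm

theorem trace_adjoint_comp_projL_comp {F : Type} [NormedAddCommGroup F] [InnerProductSpace 𝕜 F]
    [FiniteDimensional 𝕜 F] (U : Submodule 𝕜 H) (X Y : H →ₗ[𝕜] F) (hY : Y ∘ₗ projL U = Y) :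
    LinearMap.trace 𝕜 H (LinearMap.adjoint (X ∘ₗ projL U) ∘ₗ Y) =
      LinearMap.trace 𝕜 H (LinearMap.adjoint X ∘ₗ Y) := by
  rw [LinearMap.adjoint_comp, adjoint_projL, LinearMap.comp_assoc, LinearMap.trace_comp_comm',
    LinearMap.comp_assoc, hY]

theorem MJ_comp_analysisOp_comp_projL (i : Fin m) :
    (MJ W {i} ∘ₗ analysisOp W w) ∘ₗ projL (W i) = MJ W {i} ∘ₗ analysisOp W w := by
  ext f j
  by_cases hj : j = i
  · subst hj
    simp [MJ, analysisOp, projL,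
      Submodule.starProjection_eq_self_iff.mpr (Submodule.starProjection_apply_mem _ _)]
  · simp [MJ, hj]

theorem synthOp_comp_MJ_comp_analysisOp (i : Fin m) :
    synthOp W w ∘ₗ MJ W {i} ∘ₗ analysisOp W w = ((w i ^ 2 : ℝ) : 𝕜) • projL (W i) := by
  ext f
  simp only [LinearMap.comp_apply, synthOp, analysisOp, MJ, LinearMap.coe_mk, AddHom.coe_mk,
    LinearMap.smul_apply]
  rw [Finset.sum_eq_single i (fun j _ hj => by simp [hj]) (by simp)]
  simp [projL, smul_smul, sq]

theorem synthOp_comp_analysisOp : synthOp W w ∘ₗ analysisOp W w = fusionFrameOp W w := by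
  rw [fusionFrameOp, ← sum_comp_MJ_singleton_comp W]
  exact Finset.sum_congr rfl fun i _ => synthOp_comp_MJ_comp_analysisOp W w i

theorem MJ_analysisOp_inv_smul {i : Fin m} (hw : w i ≠ 0) (g : FFSpace W) :
    MJ W {i} (analysisOp W w (((w i)⁻¹ : 𝕜) • (g i : H))) = MJ W {i} g := by
  ext j
  by_cases hj : j = i
  · subst hj
    simp [MJ, analysisOp, smul_smul, hw]
  · simp [MJ, hj]

theorem eq_of_comp_MJ_comp_analysisOp_eq {G : Type*} [AddCommGroup G] [Module 𝕜 G]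
    (hw : ∀ i, w i ≠ 0) {A B : FFSpace W →ₗ[𝕜] G}
    (hAB : ∀ i, A ∘ₗ MJ W {i} ∘ₗ analysisOp W w = B ∘ₗ MJ W {i} ∘ₗ analysisOp W w) : A = B := by
  ext g
  rw [← sum_MJ_singleton_apply W g, map_sum, map_sum]
  refine Finset.sum_congr rfl fun i _ => ?_
  rw [← MJ_analysisOp_inv_smul W w (hw i) g]
  exact LinearMap.congr_fun (hAB i) _

variable (Sinv : H →ₗ[𝕜] H)

theorem canonical_comp_analysisOp (h' : Sinv ∘ₗ fusionFrameOp W w = LinearMap.id) :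
    (Sinv ∘ₗ synthOp W w) ∘ₗ analysisOp W w = LinearMap.id := by
  rw [LinearMap.comp_assoc, synthOp_comp_analysisOp, h']

theorem canonical_comp_MJ_comp_analysisOp (i : Fin m) :
    (Sinv ∘ₗ synthOp W w) ∘ₗ MJ W {i} ∘ₗ analysisOp W w =
      ((w i ^ 2 : ℝ) : 𝕜) • (Sinv ∘ₗ projL (W i)) := by
  rw [LinearMap.comp_assoc, synthOp_comp_MJ_comp_analysisOp, LinearMap.comp_smul]

theorem sqrt_frobSq_canonical_block (i : Fin m) :
    Real.sqrt (frobSq ((Sinv ∘ₗ synthOp W w) ∘ₗ MJ W {i} ∘ₗ analysisOp W w)) =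
      w i ^ 2 * Real.sqrt (frobSq (Sinv ∘ₗ projL (W i))) := by
  rw [sqrt_frobSq_eq_norm_frobeniusVec, canonical_comp_MJ_comp_analysisOp, map_smul, norm_smul,
    RCLike.norm_ofReal, abs_of_nonneg (sq_nonneg _), sqrt_frobSq_eq_norm_frobeniusVec]

theorem inner_frobeniusVec_canonical_block (B : FFSpace W →ₗ[𝕜] H) (i : Fin m) :
    ⟪frobeniusVec ((Sinv ∘ₗ synthOp W w) ∘ₗ MJ W {i} ∘ₗ analysisOp W w),
        frobeniusVec (B ∘ₗ MJ W {i} ∘ₗ analysisOp W w)⟫_𝕜 =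
      ((w i ^ 2 : ℝ) : 𝕜) *
        LinearMap.trace 𝕜 H (LinearMap.adjoint Sinv ∘ₗ B ∘ₗ MJ W {i} ∘ₗ analysisOp W w) := by
  have hB : (B ∘ₗ MJ W {i} ∘ₗ analysisOp W w) ∘ₗ projL (W i) = B ∘ₗ MJ W {i} ∘ₗ analysisOp W w := by
    rw [LinearMap.comp_assoc, MJ_comp_analysisOp_comp_projL]
  rw [canonical_comp_MJ_comp_analysisOp, map_smul, inner_smul_left, RCLike.conj_ofReal,
    ← trace_adjoint_comp_eq_inner_frobeniusVec, trace_adjoint_comp_projL_comp _ _ _ hB]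

theorem sum_inner_frobeniusVec_canonical_block (hw : ∀ i, w i ≠ 0) {B : FFSpace W →ₗ[𝕜] H}
    (hB : B ∘ₗ analysisOp W w = LinearMap.id) :
    ∑ i, (((w i ^ 2)⁻¹ : ℝ) : 𝕜) *
        ⟪frobeniusVec ((Sinv ∘ₗ synthOp W w) ∘ₗ MJ W {i} ∘ₗ analysisOp W w),
          frobeniusVec (B ∘ₗ MJ W {i} ∘ₗ analysisOp W w)⟫_𝕜 =
      LinearMap.trace 𝕜 H (LinearMap.adjoint Sinv) := by
  have hsum : ∑ i, LinearMap.adjoint Sinv ∘ₗ B ∘ₗ MJ W {i} ∘ₗ analysisOp W w =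
      LinearMap.adjoint Sinv ∘ₗ B ∘ₗ analysisOp W w :=
    sum_comp_MJ_singleton_comp W (LinearMap.adjoint Sinv ∘ₗ B) (analysisOp W w)
  simp_rw [inner_frobeniusVec_canonical_block, ← mul_assoc, ← RCLike.ofReal_mul,
    inv_mul_cancel₀ (pow_ne_zero 2 (hw _)), RCLike.ofReal_one, one_mul]
  rw [← map_sum, hsum, hB, LinearMap.comp_id]

theorem eq_canonical_of_sqrt_frobSq_le (hw : ∀ i, w i ≠ 0)
    (h' : Sinv ∘ₗ fusionFrameOp W w = LinearMap.id) {B : FFSpace W →ₗ[𝕜] H}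
    (hB : B ∘ₗ analysisOp W w = LinearMap.id)
    (hle : ∀ i, Real.sqrt (frobSq (B ∘ₗ MJ W {i} ∘ₗ analysisOp W w)) ≤
      Real.sqrt (frobSq ((Sinv ∘ₗ synthOp W w) ∘ₗ MJ W {i} ∘ₗ analysisOp W w))) :
    B = Sinv ∘ₗ synthOp W w := by
  have hblocks := eq_of_norm_le_of_sum_inner_eq (r := fun i => (w i ^ 2)⁻¹)
    (fun i => by have := hw i; positivity)
    (fun i => by simpa only [sqrt_frobSq_eq_norm_frobeniusVec] using hle i)
    ((sum_inner_frobeniusVec_canonical_block W w Sinv hw hB).trans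
      (sum_inner_frobeniusVec_canonical_block W w Sinv hw
        (canonical_comp_analysisOp W w Sinv h')).symm)
  exact eq_of_comp_MJ_comp_analysisOp_eq W w hw fun i =>
    frobeniusVec_injective (congrFun hblocks i)

theorem comp_toContinuousLinearMap_eq_id_iff (A : FFSpace W →L[𝕜] H) :
    A ∘L LinearMap.toContinuousLinearMap (analysisOp W w) = ContinuousLinearMap.id 𝕜 H ↔
      (A : FFSpace W →ₗ[𝕜] H) ∘ₗ analysisOp W w = LinearMap.id := by
  rw [← ContinuousLinearMap.coe_inj]
  rfl

theorem sqrt_frobSq_le_maxErr (A : FFSpace W →L[𝕜] H) (i : Fin m) :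
    Real.sqrt (frobSq ((A : FFSpace W →ₗ[𝕜] H) ∘ₗ MJ W {i} ∘ₗ analysisOp W w)) ≤ maxErr W w A :=
  le_ciSup (f := fun i =>
    Real.sqrt (frobSq ((A : FFSpace W →ₗ[𝕜] H) ∘ₗ MJ W {i} ∘ₗ analysisOp W w)))
    (Set.finite_range _).bddAbove i

theorem maxErr_eq_of_forall_eq [Nonempty (Fin m)] {A : FFSpace W →L[𝕜] H} {c : ℝ}
    (h : ∀ i, Real.sqrt (frobSq ((A : FFSpace W →ₗ[𝕜] H) ∘ₗ MJ W {i} ∘ₗ analysisOp W w)) = c) :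
    maxErr W w A = c := by
  simp only [maxErr, h, ciSup_const]

end FusionFrame

theorem setOf_and_eq_ciInf_eq_singleton {α β : Type*} [ConditionallyCompleteLinearOrder β]
    {P : α → Prop} {f : α → β} {a₀ : α} (ha₀ : P a₀) (hunique : ∀ b, P b → f b ≤ f a₀ → b = a₀) :
    {a | P a ∧ f a = ⨅ b : {b // P b}, f b} = {a₀} := by
  have : Nonempty {b // P b} := ⟨⟨a₀, ha₀⟩⟩
  have hmin : ∀ b : {b // P b}, f a₀ ≤ f b := fun b =>
    le_of_not_gt fun hlt => hlt.ne (congrArg f (hunique b b.2 hlt.le))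
  have hinf : ⨅ b : {b // P b}, f b = f a₀ :=
    le_antisymm (ciInf_le ⟨f a₀, Set.forall_mem_range.2 hmin⟩ ⟨a₀, ha₀⟩) (le_ciInf hmin)
  ext a
  simp only [Set.mem_ofPred_eq, Set.mem_singleton_iff, hinf]
  exact ⟨fun ⟨hPa, hfa⟩ => hunique a hPa hfa.le, by rintro rfl; exact ⟨ha₀, rfl⟩⟩

theorem canonical_unique_optimal_general
    {𝕜 : Type} [RCLike 𝕜] {H : Type} [NormedAddCommGroup H] [InnerProductSpace 𝕜 H]
    [FiniteDimensional 𝕜 H] {m : ℕ}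
    (W : Fin m → Submodule 𝕜 H) (w : Fin m → ℝ) (hw : ∀ i, 0 < w i)
    (Sinv : H →ₗ[𝕜] H)
    (h' : Sinv ∘ₗ fusionFrameOp W w = LinearMap.id)
    (c : ℝ) (hc : ∀ i, w i ^ 2 * Real.sqrt (frobSq (Sinv ∘ₗ projL (W i))) = c) :
    optimalSet W w = {LinearMap.toContinuousLinearMap (Sinv ∘ₗ synthOp W w)} := by
  have hblock : ∀ i,
      Real.sqrt (frobSq ((Sinv ∘ₗ synthOp W w) ∘ₗ MJ W {i} ∘ₗ analysisOp W w)) = c := fun i =>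
    (sqrt_frobSq_canonical_block W w Sinv i).trans (hc i)
  refine setOf_and_eq_ciInf_eq_singleton (f := maxErr W w) ?_ fun B hB hle => ?_
  · rw [comp_toContinuousLinearMap_eq_id_iff, LinearMap.coe_toContinuousLinearMap]
    exact canonical_comp_analysisOp W w Sinv h'
  · rw [comp_toContinuousLinearMap_eq_id_iff] at hB
    refine ContinuousLinearMap.coe_injective
      (eq_canonical_of_sqrt_frobSq_le W w Sinv (fun i => (hw i).ne') h' hB fun i => ?_)
    have : Nonempty (Fin m) := ⟨i⟩
    calc _ ≤ maxErr W w B := sqrt_frobSq_le_maxErr W w B i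
      _ ≤ _ := hle
      _ = c := maxErr_eq_of_forall_eq W w (by simpa only [LinearMap.coe_toContinuousLinearMap])
      _ = _ := (hblock i).symm

/-- if `(W,w)` is a fusion frame with `wᵢ² ‖S_{W,w}⁻¹ π_{Wᵢ}‖_F = c` for
every `i`, then `S_{W,w}⁻¹ T_{W,w}` is the unique left inverse of `T*_{W,w}` minimizing
the worst-case one-erasure error. -/
theorem canonical_unique_optimal
    {𝕜 : Type} [RCLike 𝕜] {H : Type} [NormedAddCommGroup H] [InnerProductSpace 𝕜 H]
    [FiniteDimensional 𝕜 H] {m : ℕ}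
    (W : Fin m → Submodule 𝕜 H) (w : Fin m → ℝ) (hw : ∀ i, 0 < w i) (hW : ⨆ i, W i = ⊤)
    (Sinv : H →ₗ[𝕜] H)
    (h : fusionFrameOp W w ∘ₗ Sinv = LinearMap.id)
    (h' : Sinv ∘ₗ fusionFrameOp W w = LinearMap.id)
    (c : ℝ) (hc : ∀ i, w i ^ 2 * Real.sqrt (frobSq (Sinv ∘ₗ projL (W i))) = c) :
    optimalSet W w = {LinearMap.toContinuousLinearMap (Sinv ∘ₗ synthOp W w)} :=
  canonical_unique_optimal_general W w hw Sinv h' c hc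
end
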